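/- arXiv:1509.00888 — 3 statements merged into one kernel-verified Lean document; each statement's English description precedes it below -/
import Mathlib

section
/- Let A* ∈ ℂ^{N×n} be isometric and b ∈ ℝ^N a fixed vector with positive entries. Then the map S_f : y ↦ y + A*A(2 b⊙ω_y − y) − b⊙ω_y is Fréchet differentiable over ℝ at every y ∈ ℂ^N all of whose components are nonzero, and its derivative is the ℝ-linear map η ↦ Ω·[ (I − B*B) v + i (2 B*B − I)·((b/|y|) ⊙ Im(v)) ] where ω = ω_y (the componentwise phase of y), Ω·w := ω ⊙ w, v := conj(ω) ⊙ η, B := A·diag(ω) with A = (A*)^H, |y| is the componentwise modulus of y, and b/|y| is the componentwise quotient. -/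
open Matrix Complex

noncomputable section

/-- The componentwise phase `z/|z|`. -/
noncomputable def phase (z : ℂ) : ℂ := z / (‖z‖ : ℂ)

/-- The Fourier-domain Douglas-Rachford map
`S_f(y) = y + A*A(2 b⊙ω_y − y) − b⊙ω_y`. -/
noncomputable def Sf {N n : ℕ} (Aadj : Matrix (Fin N) (Fin n) ℂ) (b : Fin N → ℝ)
    (y : Fin N → ℂ) : Fin N → ℂ :=
  fun j => y j
    + Aadj.mulVec (Aadjᴴ.mulVec (fun i => 2 * (b i : ℂ) * phase (y i) - y i)) j
    - (b j : ℂ) * phase (y j)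

/-- `B*B v` where `B = A·diag(ω)`. -/
noncomputable def BstarB {N n : ℕ} (Aadj : Matrix (Fin N) (Fin n) ℂ) (ω : Fin N → ℂ)
    (v : Fin N → ℂ) : Fin N → ℂ :=
  fun j => (starRingEnd ℂ) (ω j) * Aadj.mulVec (Aadjᴴ.mulVec (fun i => ω i * v i)) j

/-!
Away from `0`, `phase z = z / |z|` is a smooth map of the real plane whose derivative
`w ↦ i ω Im(ω̄ w) / |z|` (with `ω = phase z`) only sees the angular part of `w`; the remaining
parts of `S_f` are `ℝ`-affine, so `S_f` is differentiable at `y` by the chain rule. Writing an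
increment as `η = ω ⊙ v` and using `ω ω̄ = 1` rearranges the derivative into the stated form.
-/

open ComplexConjugate

theorem hasFDerivAt_norm_of_ne_zero {F : Type*} [NormedAddCommGroup F] [InnerProductSpace ℝ F]
    {x : F} (hx : x ≠ 0) : HasFDerivAt (‖·‖) (‖x‖⁻¹ • innerSL ℝ x) x := by
  have h := (hasStrictFDerivAt_norm_sq x).hasFDerivAt.sqrt (by positivity)
  simp only [Real.sqrt_sq (norm_nonneg _)] at h
  convert h using 1
  ext
  simp
  ring

-- Only the angular component `Im(ω̄ w)` of an increment `w` moves the phase `ω` of `z`.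
def phaseDeriv (z : ℂ) : ℂ →L[ℝ] ℂ :=
  (imCLM ∘L ContinuousLinearMap.mul ℝ ℂ (conj (phase z))).smulRight (I * phase z / ‖z‖)

@[simp]
theorem phaseDeriv_apply (z w : ℂ) :
    phaseDeriv z w = (conj (phase z) * w).im * (I * phase z / ‖z‖) := by
  simp [phaseDeriv]

theorem hasFDerivAt_phase {z : ℂ} (hz : z ≠ 0) : HasFDerivAt phase (phaseDeriv z) z := by
  have hn : ‖z‖ ≠ 0 := norm_ne_zero_iff.2 hz
  have h := ((hasDerivAt_inv hn).comp_hasFDerivAt z (hasFDerivAt_norm_of_ne_zero hz)).smul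
    (hasFDerivAt_id z)
  have hphase : phase = fun w => ‖w‖⁻¹ • w :=
    funext fun w => by simp [phase, real_smul, div_eq_inv_mul]
  rw [hphase]
  refine h.congr_fderiv (ContinuousLinearMap.ext fun w => ?_)
  have hsq : ‖z‖ ^ 2 = z.re ^ 2 + z.im ^ 2 := by
    rw [← normSq_eq_norm_sq, normSq_apply]
    ring
  apply Complex.ext <;> simp [phase, Complex.inner, -ofReal_pow] <;> field_simp <;> rw [hsq] <;> ring

theorem phase_mul_conj {z : ℂ} (hz : z ≠ 0) : phase z * conj (phase z) = 1 := by
  rw [mul_conj, normSq_eq_norm_sq, phase, norm_div, norm_real, norm_norm,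
    div_self (norm_ne_zero_iff.2 hz)]
  simp

theorem phase_mul_conj_mul {z : ℂ} (hz : z ≠ 0) (w : ℂ) : phase z * (conj (phase z) * w) = w := by
  rw [← mul_assoc, phase_mul_conj hz, one_mul]

theorem smul_phaseDeriv_apply (c : ℝ) (z w : ℂ) :
    c • phaseDeriv z w
      = I * (phase z * (((c / ‖z‖ : ℝ) : ℂ) * (((conj (phase z) * w).im : ℝ) : ℂ))) := by
  rw [phaseDeriv_apply, real_smul]
  push_cast
  ring

def weightedPhaseDeriv {ι : Type*} [Fintype ι] (c : ι → ℝ) (y : ι → ℂ) :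
    (ι → ℂ) →L[ℝ] (ι → ℂ) :=
  ContinuousLinearMap.pi fun j => (c j • phaseDeriv (y j)) ∘L .proj j

theorem weightedPhaseDeriv_apply {ι : Type*} [Fintype ι] (c : ι → ℝ) (y η : ι → ℂ) :
    weightedPhaseDeriv c y η = I • fun i =>
      phase (y i) * (((c i / ‖y i‖ : ℝ) : ℂ) * (((conj (phase (y i)) * η i).im : ℝ) : ℂ)) :=
  funext fun i => smul_phaseDeriv_apply (c i) (y i) (η i)

theorem hasFDerivAt_weightedPhase {ι : Type*} [Fintype ι] (c : ι → ℝ) {y : ι → ℂ}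
    (hy : ∀ j, y j ≠ 0) :
    HasFDerivAt (fun x j => (c j : ℂ) * phase (x j)) (weightedPhaseDeriv c y) y :=
  hasFDerivAt_pi.2 fun j => by
    have h := HasFDerivAt.comp (f := fun x : ι → ℂ => x j) y
      ((hasFDerivAt_phase (hy j)).const_smul (c j)) (hasFDerivAt_apply j y)
    simpa only [Function.comp_def, Pi.smul_apply, real_smul] using h

section

variable {N n : ℕ} (Aadj : Matrix (Fin N) (Fin n) ℂ) (b : Fin N → ℝ)

theorem BstarB_apply (ω v : Fin N → ℂ) (j : Fin N) :
    BstarB Aadj ω v j = conj (ω j) * ((Aadj * Aadjᴴ) *ᵥ fun i => ω i * v i) j := by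
  rw [BstarB, mulVec_mulVec]

theorem Sf_eq : Sf Aadj b = fun x =>
    x + (Aadj * Aadjᴴ) *ᵥ ((2 : ℝ) • (fun j => (b j : ℂ) * phase (x j)) - x)
      - fun j => (b j : ℂ) * phase (x j) := by
  funext x j
  simp only [Sf, Pi.add_apply, Pi.sub_apply, mulVec_mulVec]
  congr 4
  funext i
  simp only [Pi.sub_apply, Pi.smul_apply, real_smul]
  push_cast
  ring

theorem hasFDerivAt_Sf {y : Fin N → ℂ} (hy : ∀ j, y j ≠ 0) :
    HasFDerivAt (Sf Aadj b)
      (.id ℝ _ + (mulVecLin (Aadj * Aadjᴴ)).toContinuousLinearMap.restrictScalars ℝ ∘L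
          ((2 : ℝ) • weightedPhaseDeriv b y - .id ℝ _)
        - weightedPhaseDeriv b y) y := by
  have hΦ := hasFDerivAt_weightedPhase b hy
  let P := (mulVecLin (Aadj * Aadjᴴ)).toContinuousLinearMap.restrictScalars ℝ
  rw [Sf_eq]
  exact ((hasFDerivAt_id y).add
    (P.hasFDerivAt.comp y ((hΦ.const_smul (2 : ℝ)).sub (hasFDerivAt_id y)))).sub hΦ

end

theorem stmt1_general (N n : ℕ) (Aadj : Matrix (Fin N) (Fin n) ℂ)
    (b : Fin N → ℝ)
    (y : Fin N → ℂ) (hy : ∀ j, y j ≠ 0) :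
    ∃ L : (Fin N → ℂ) →L[ℝ] (Fin N → ℂ),
      HasFDerivAt (Sf Aadj b) L y ∧
      ∀ η : Fin N → ℂ, L η = fun j =>
        phase (y j) *
          ((((starRingEnd ℂ) (phase (y j)) * η j)
              - BstarB Aadj (fun i => phase (y i))
                  (fun i => (starRingEnd ℂ) (phase (y i)) * η i) j)
            + Complex.I *
              (2 * BstarB Aadj (fun i => phase (y i))
                    (fun i => ((b i / ‖y i‖ : ℝ) : ℂ) *
                      ((((starRingEnd ℂ) (phase (y i)) * η i).im : ℝ) : ℂ)) j
                - ((b j / ‖y j‖ : ℝ) : ℂ) *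
                    ((((starRingEnd ℂ) (phase (y j)) * η j).im : ℝ) : ℂ))) := by
  refine ⟨_, hasFDerivAt_Sf Aadj b hy, fun η => ?_⟩
  have hDη := weightedPhaseDeriv_apply b y η
  set u : Fin N → ℂ := fun i => ((b i / ‖y i‖ : ℝ) : ℂ) *
    (((conj (phase (y i)) * η i).im : ℝ) : ℂ)
  have hωv : (fun i => phase (y i) * (conj (phase (y i)) * η i)) = η :=
    funext fun i => phase_mul_conj_mul (hy i) (η i)
  funext j
  rw [BstarB_apply, BstarB_apply, hωv]
  simp only [_root_.sub_apply, _root_.add_apply,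
    ContinuousLinearMap.coe_id', id, ContinuousLinearMap.comp_apply, _root_.smul_apply, hDη,
    ContinuousLinearMap.coe_restrictScalars', LinearMap.coe_toContinuousLinearMap',
    mulVecLin_apply, smul_comm (2 : ℝ) I, mulVec_sub, mulVec_smul]
  simp only [Pi.add_apply, Pi.sub_apply, Pi.smul_apply, smul_eq_mul, real_smul, ofReal_ofNat]
  linear_combination (((Aadj * Aadjᴴ) *ᵥ η) j - η j
    - 2 * I * ((Aadj * Aadjᴴ) *ᵥ fun i => phase (y i) * u i) j) * phase_mul_conj (hy j)

/-- `S_f` is Fréchet differentiable over `ℝ` at every vector with nonvanishing components,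
with derivative `η ↦ Ω [(I − B*B)v + i(2B*B − I)((b/|y|) ⊙ Im v)]`, `v = conj(ω) ⊙ η`. -/
theorem stmt1 (N n : ℕ) (Aadj : Matrix (Fin N) (Fin n) ℂ) (hiso : Aadjᴴ * Aadj = 1)
    (b : Fin N → ℝ) (hb : ∀ j, 0 < b j)
    (y : Fin N → ℂ) (hy : ∀ j, y j ≠ 0) :
    ∃ L : (Fin N → ℂ) →L[ℝ] (Fin N → ℂ),
      HasFDerivAt (Sf Aadj b) L y ∧
      ∀ η : Fin N → ℂ, L η = fun j =>
        phase (y j) *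
          ((((starRingEnd ℂ) (phase (y j)) * η j)
              - BstarB Aadj (fun i => phase (y i))
                  (fun i => (starRingEnd ℂ) (phase (y i)) * η i) j)
            + Complex.I *
              (2 * BstarB Aadj (fun i => phase (y i))
                    (fun i => ((b i / ‖y i‖ : ℝ) : ℂ) *
                      ((((starRingEnd ℂ) (phase (y i)) * η i).im : ℝ) : ℂ)) j
                - ((b j / ‖y j‖ : ℝ) : ℂ) *
                    ((((starRingEnd ℂ) (phase (y j)) * η j).im : ℝ) : ℂ))) :=
  stmt1_general N n Aadj b y hy
end
end

section
/- Let A* ∈ ℂ^{N×n} be isometric, x0 ∈ ℂ^n with y0 := A*x0 having all components nonzero, ω0 the componentwise phase of y0, B := A·diag(ω0) with A = (A*)^H, and 𝓑 ∈ ℝ^{2n×N} the real form of B. Then the eigenvalues (with multiplicity) of the real symmetric matrix 𝓑𝓑^T ∈ ℝ^{2n×2n} are invariant under the involution μ ↦ 1 − μ; equivalently, the characteristic polynomial p of 𝓑𝓑^T satisfies p(1 − X) = p(X) (composition of p with the polynomial 1 − X). In particular, the squared singular values λ_k² of 𝓑, listed in decreasing order λ_1 ≥ … ≥ λ_{2n},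 satisfy λ_k² + λ_{2n+1−k}² = 1 for k = 1, …, n. -/
/-!
Since `|ω0 j| = 1`, the matrix `B = A diag(ω0)` satisfies `B Bᴴ = A A* = 1`. Writing `B = P + iQ`, the
real and imaginary parts of this identity read `P Pᵀ + Q Qᵀ = 1` and `Q Pᵀ = P Qᵀ`. With these,
`𝓑𝓑ᵀ = [[P Pᵀ, P Qᵀ], [Q Pᵀ, Q Qᵀ]]` is conjugated by the orthogonal matrix `J = [[0, 1], [-1, 0]]`
into `1 - 𝓑𝓑ᵀ`, so `𝓑𝓑ᵀ` and `1 - 𝓑𝓑ᵀ` have the same characteristic polynomial, which in even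
dimension is `p(1 - X)`. Hence the eigenvalue multiset is stable under `μ ↦ 1 - μ`, and a decreasing
enumeration `λ` of it must coincide with the decreasing enumeration `k ↦ 1 - λ (rev k)`.
-/

open Matrix Complex Polynomial

noncomputable section

/-- `B = A · diag(ω0)` where `A = (A*)ᴴ`. -/
noncomputable def Bmat {N n : ℕ} (Aadj : Matrix (Fin N) (Fin n) ℂ) (ω0 : Fin N → ℂ) :
    Matrix (Fin n) (Fin N) ℂ := fun i j => Aadjᴴ i j * ω0 j

/-- The real form `𝓑 = [Re B; Im B]` of `B`. -/
noncomputable def calB {N n : ℕ} (Aadj : Matrix (Fin N) (Fin n) ℂ) (ω0 : Fin N → ℂ) :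
    Matrix (Fin n ⊕ Fin n) (Fin N) ℝ :=
  Matrix.fromRows ((Bmat Aadj ω0).map Complex.re) ((Bmat Aadj ω0).map Complex.im)

namespace Polynomial

variable {R : Type*} [CommRing R]

theorem prod_X_sub_C_comp_one_sub_X {ι : Type*} [Fintype ι] (a : ι → R)
    (h : Even (Fintype.card ι)) :
    (∏ i, (X - C (a i))).comp (1 - X) = ∏ i, (X - C (1 - a i)) := by
  have hfactor : ∀ i, (X - C (a i)).comp (1 - X) = -(X - C (1 - a i)) := fun i => by
    simp only [sub_comp, X_comp, C_comp, map_sub, C_1]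
    ring
  rw [prod_comp, Finset.prod_congr rfl fun i _ => hfactor i, Finset.prod_neg, Finset.card_univ,
    h.neg_one_pow, one_mul]

theorem roots_prod_X_sub_C_fin [IsDomain R] {m : ℕ} (f : Fin m → R) :
    (∏ k, (X - C (f k))).roots = (List.ofFn f : Multiset R) := by
  rw [← Fin.univ_val_map, ← roots_multiset_prod_X_sub_C (Finset.univ.val.map f),
    Multiset.map_map, Finset.prod_map_val]
  rfl

end Polynomial

theorem Antitone.eq_of_prod_X_sub_C_eq {R : Type*} [CommRing R] [IsDomain R] [LinearOrder R]
    {m : ℕ} {f g : Fin m → R} (hf : Antitone f) (hg : Antitone g)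
    (h : ∏ k, (X - C (f k)) = ∏ k, (X - C (g k))) : f = g := by
  have hperm : (List.ofFn f).Perm (List.ofFn g) := by
    simpa only [roots_prod_X_sub_C_fin, Multiset.coe_eq_coe] using congrArg roots h
  exact List.ofFn_inj.mp (hperm.eq_of_sortedGE hf.sortedGE_ofFn hg.sortedGE_ofFn)

theorem Antitone.add_rev_eq_one_of_prod_X_sub_C_comp_one_sub_X {R : Type*} [CommRing R]
    [IsDomain R] [LinearOrder R] [IsOrderedRing R] {m : ℕ} (hm : Even m) {f : Fin m → R}
    (hf : Antitone f) (h : (∏ k, (X - C (f k))).comp (1 - X) = ∏ k, (X - C (f k)))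
    (k : Fin m) : f k + f k.rev = 1 := by
  have hreflect : Antitone fun k : Fin m => 1 - f k.rev := fun a b hab =>
    sub_le_sub_left (hf (Fin.rev_le_rev.mpr hab)) 1
  have hprod : ∏ k, (X - C (f k)) = ∏ k : Fin m, (X - C (1 - f k.rev)) := by
    rw [← h, prod_X_sub_C_comp_one_sub_X f (by simpa using hm)]
    exact (Fintype.prod_equiv Fin.revPerm _ _ fun _ => rfl).symm
  have hk := congrFun (hf.eq_of_prod_X_sub_C_eq hreflect hprod) k
  linear_combination hk

namespace Matrix

section Charpoly

variable {R : Type*} [CommRing R]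

theorem charpoly_comp_one_sub_X {ι : Type*} [Fintype ι] [DecidableEq ι] (M : Matrix ι ι R)
    (h : Even (Fintype.card ι)) : M.charpoly.comp (1 - X) = (1 - M).charpoly := by
  have hmap : (charmatrix M).map (compRingHom (1 - X)) = -charmatrix (1 - M) := by
    ext i j : 1
    by_cases hij : i = j
    · subst hij
      simp only [map_apply, charmatrix_apply_eq, coe_compRingHom, neg_apply, sub_apply,
        one_apply_eq, sub_comp, X_comp, C_comp, map_sub, C_1]
      ring
    · simp [charmatrix_apply_ne _ _ _ hij, one_apply_ne hij]
  change compRingHom (1 - X) (charmatrix M).det = _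
  rw [RingHom.map_det, RingHom.mapMatrix_apply, hmap, det_neg, charpoly, h.neg_one_pow, one_mul]

variable {m k : Type*} [Fintype m] [DecidableEq m] [Fintype k]

theorem conj_gram_fromRows_eq_one_sub {P Q : Matrix m k R} (hsum : P * Pᵀ + Q * Qᵀ = 1)
    (hcomm : Q * Pᵀ = P * Qᵀ) :
    fromBlocks 0 1 (-1) 0 * (fromRows P Q * (fromRows P Q)ᵀ) * (fromBlocks 0 1 (-1) 0)ᵀ
      = 1 - fromRows P Q * (fromRows P Q)ᵀ := by
  rw [transpose_fromRows, fromRows_mul_fromCols, fromBlocks_transpose, fromBlocks_multiply,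
    fromBlocks_multiply, ← fromBlocks_one, eq_sub_iff_add_eq, fromBlocks_add]
  simp only [zero_mul, one_mul, zero_add, add_zero, transpose_zero, transpose_one, transpose_neg,
    mul_zero, mul_one, mul_neg, neg_mul, neg_neg]
  rw [hcomm, add_comm (Q * Qᵀ), hsum, neg_add_cancel]

theorem charpoly_gram_fromRows_comp_one_sub_X {P Q : Matrix m k R}
    (hsum : P * Pᵀ + Q * Qᵀ = 1) (hcomm : Q * Pᵀ = P * Qᵀ) :
    (fromRows P Q * (fromRows P Q)ᵀ).charpoly.comp (1 - X)
      = (fromRows P Q * (fromRows P Q)ᵀ).charpoly := by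
  have hJ : (fromBlocks 0 1 (-1) 0 : Matrix (m ⊕ m) (m ⊕ m) R)ᵀ * fromBlocks 0 1 (-1) 0 = 1 := by
    simp [fromBlocks_transpose, fromBlocks_multiply, fromBlocks_one]
  rw [charpoly_comp_one_sub_X _ (by simp), ← conj_gram_fromRows_eq_one_sub hsum hcomm,
    charpoly_mul_comm, ← mul_assoc, hJ, one_mul]

end Charpoly

section RealForm

variable {m k : Type*} [Fintype k]

theorem map_re_mul_conjTranspose (Z W : Matrix m k ℂ) :
    (Z * Wᴴ).map re = Z.map re * (W.map re)ᵀ + Z.map im * (W.map im)ᵀ := by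
  ext i j
  simp [mul_apply, Finset.sum_add_distrib]

theorem map_im_mul_conjTranspose (Z W : Matrix m k ℂ) :
    (Z * Wᴴ).map im = Z.map im * (W.map re)ᵀ - Z.map re * (W.map im)ᵀ := by
  ext i j
  simp [mul_apply, ← Finset.sum_sub_distrib, neg_add_eq_sub]

theorem charpoly_gram_realForm_comp_one_sub_X [Fintype m] [DecidableEq m] {Z : Matrix m k ℂ}
    (hZ : Z * Zᴴ = 1) :
    (fromRows (Z.map re) (Z.map im) * (fromRows (Z.map re) (Z.map im))ᵀ).charpoly.comp (1 - X)
      = (fromRows (Z.map re) (Z.map im) * (fromRows (Z.map re) (Z.map im))ᵀ).charpoly := by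
  have hsum := map_re_mul_conjTranspose Z Z
  have hcomm := map_im_mul_conjTranspose Z Z
  rw [hZ, Matrix.map_one _ zero_re one_re] at hsum
  rw [hZ, ← diagonal_one, diagonal_map zero_im, one_im, diagonal_zero, eq_comm,
    sub_eq_zero] at hcomm
  exact charpoly_gram_fromRows_comp_one_sub_X hsum.symm hcomm

end RealForm

end Matrix

theorem norm_phase {z : ℂ} (hz : z ≠ 0) : ‖phase z‖ = 1 := by
  rw [phase, norm_div, norm_real, norm_norm, div_self (norm_ne_zero_iff.mpr hz)]

theorem Bmat_eq_conjTranspose_mul_diagonal {N n : ℕ} (A : Matrix (Fin N) (Fin n) ℂ)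
    (ω : Fin N → ℂ) : Bmat A ω = Aᴴ * diagonal ω := by
  ext i j
  simp [Bmat, mul_diagonal]

theorem Bmat_mul_conjTranspose {N n : ℕ} (A : Matrix (Fin N) (Fin n) ℂ) {ω : Fin N → ℂ}
    (hω : ∀ j, ‖ω j‖ = 1) : Bmat A ω * (Bmat A ω)ᴴ = Aᴴ * A := by
  have hunit : diagonal ω * (diagonal ω)ᴴ = 1 := by
    rw [diagonal_conjTranspose, diagonal_mul_diagonal, ← diagonal_one]
    congr 1 with j
    simp [mul_conj', hω]
  rw [Bmat_eq_conjTranspose_mul_diagonal, conjTranspose_mul, conjTranspose_conjTranspose,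
    Matrix.mul_assoc, ← Matrix.mul_assoc (diagonal ω), hunit, Matrix.one_mul]

/-- The eigenvalues of `𝓑𝓑ᵀ` are invariant under `μ ↦ 1 − μ`: the characteristic
polynomial `p` of `𝓑𝓑ᵀ` satisfies `p(1 − X) = p(X)`; in particular the decreasingly
ordered squared singular values of `𝓑` satisfy `λ_k² + λ_{2n+1−k}² = 1`. -/
theorem stmt3 (N n : ℕ) (Aadj : Matrix (Fin N) (Fin n) ℂ) (hiso : Aadjᴴ * Aadj = 1)
    (x0 : Fin n → ℂ) (hy0 : ∀ j, Aadj.mulVec x0 j ≠ 0)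
    (ω0 : Fin N → ℂ) (hω0 : ∀ j, ω0 j = phase (Aadj.mulVec x0 j)) :
    ((calB Aadj ω0 * (calB Aadj ω0)ᵀ).charpoly.comp (1 - Polynomial.X)
        = (calB Aadj ω0 * (calB Aadj ω0)ᵀ).charpoly) ∧
    ∀ lam : Fin (2 * n) → ℝ, Antitone lam →
      (calB Aadj ω0 * (calB Aadj ω0)ᵀ).charpoly
          = ∏ k : Fin (2 * n), (Polynomial.X - Polynomial.C (lam k)) →
      ∀ k : Fin (2 * n), lam k + lam k.rev = 1 := by
  have hB : Bmat Aadj ω0 * (Bmat Aadj ω0)ᴴ = 1 := by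
    rw [Bmat_mul_conjTranspose Aadj fun j => hω0 j ▸ norm_phase (hy0 j), hiso]
  have hsymm : (calB Aadj ω0 * (calB Aadj ω0)ᵀ).charpoly.comp (1 - X)
      = (calB Aadj ω0 * (calB Aadj ω0)ᵀ).charpoly := charpoly_gram_realForm_comp_one_sub_X hB
  refine ⟨hsymm, fun lam hlam hchar => ?_⟩
  rw [hchar] at hsymm
  exact hlam.add_rev_eq_one_of_prod_X_sub_C_comp_one_sub_X (even_two_mul n) hsymm
end
end

section
/- Let B ∈ ℂ^{n×N} be any complex matrix. Suppose u ∈ ℂ^n, v, v′ ∈ ℝ^N (regarded as real vectors inside ℂ^N) and λ, λ′ ∈ ℝ satisfy the singular-pair relations B v = λ u, Re(B*u) = λ v, B v′ = λ′(−i u), and Re(B*(−i u)) = λ′ v′. Then B*B v = λ(λ v + i λ′ v′) and B*B v′ = λ′(λ′ v′ − i λ v). -/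
open Matrix Complex

noncomputable section

/-- Action of `B*B` on a pair of right singular vectors of the real form of `B`
(Proposition on the eigenstructure of the linearized Douglas-Rachford map). -/
theorem stmt4 (n N : ℕ) (B : Matrix (Fin n) (Fin N) ℂ)
    (u : Fin n → ℂ) (v v' : Fin N → ℝ) (lam lam' : ℝ)
    (h1 : B.mulVec (fun j => (v j : ℂ)) = fun i => (lam : ℂ) * u i)
    (h2 : (fun j => ((Bᴴ.mulVec u) j).re) = fun j => lam * v j)
    (h3 : B.mulVec (fun j => (v' j : ℂ)) = fun i => (lam' : ℂ) * (-Complex.I * u i))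
    (h4 : (fun j => ((Bᴴ.mulVec (fun i => -Complex.I * u i)) j).re) = fun j => lam' * v' j) :
    ((Bᴴ * B).mulVec (fun j => (v j : ℂ)) =
      fun j => (lam : ℂ) * ((lam : ℂ) * (v j : ℂ) + Complex.I * (lam' : ℂ) * (v' j : ℂ))) ∧
    ((Bᴴ * B).mulVec (fun j => (v' j : ℂ)) =
      fun j => (lam' : ℂ) * ((lam' : ℂ) * (v' j : ℂ) - Complex.I * (lam : ℂ) * (v j : ℂ))) := by
  -- First: Bᴴ.mulVec (-I • u) = -I • Bᴴ.mulVec u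
  have hsmul : Bᴴ.mulVec (fun i => -Complex.I * u i) =
      fun j => -Complex.I * (Bᴴ.mulVec u) j := by
    have : (fun i => -Complex.I * u i) = (-Complex.I) • u := rfl
    rw [this, Matrix.mulVec_smul]
    rfl
  -- key : Bᴴ u = lam v + I lam' v'
  have key : ∀ j, (Bᴴ.mulVec u) j =
      (lam : ℂ) * (v j : ℂ) + Complex.I * (lam' : ℂ) * (v' j : ℂ) := by
    intro j
    have hre : ((Bᴴ.mulVec u) j).re = lam * v j := congrFun h2 j
    have him : ((Bᴴ.mulVec u) j).im = lam' * v' j := by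
      have := congrFun h4 j
      rw [hsmul] at this
      simpa using this
    apply Complex.ext <;> simp [hre, him]
  constructor
  · rw [← Matrix.mulVec_mulVec, h1]
    have : (fun i => (lam : ℂ) * u i) = (lam : ℂ) • u := rfl
    rw [this, Matrix.mulVec_smul]
    funext j
    simp [key j]
  · rw [← Matrix.mulVec_mulVec, h3]
    have : (fun i => (lam' : ℂ) * (-Complex.I * u i)) = ((lam' : ℂ) * (-Complex.I)) • u := by
      funext i; simp [mul_assoc]
    rw [this, Matrix.mulVec_smul]
    funext j
    simp [key j]
    ring_nf
    rw [Complex.I_sq]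
    ring
end
end
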